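/- The permutation σ output by the Deodhar maximal lift procedure (inputs p, Y, w with Y ≤ {w_1,...,w_p}) satisfies: σW_p = Y, σ ≤ w in Bruhat order, and for any v ∈ S_n with vW_p = Y and v ≰ σ, one has v ≰ w. Consequently σ is the unique maximal element of {v ∈ S_n : vW_p = Y, v ≤ w}. -/

import Mathlib

/-- Dominance order on equal-cardinality finite sets of naturals:
the i-th smallest element of `E` is at most the i-th smallest element of `F`. -/
def Dom (E F : Finset ℕ) : Prop :=
  List.Forall₂ (· ≤ ·) (Finset.sort E (· ≤ ·)) (Finset.sort F (· ≤ ·))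

/-- The k-th smallest element of `E` (1-based), with junk value 0 out of range. -/
def nth (E : Finset ℕ) (k : ℕ) : ℕ := (Finset.sort E (· ≤ ·)).getD (k - 1) 0

/-- The (0-based) level of `e` in `E`: its index in the increasing enumeration. -/
def level (e : ℕ) (E : Finset ℕ) : ℕ := List.idxOf e (Finset.sort E (· ≤ ·))

/-- The Bruhat order, via the tableau criterion, on permutations of `[n] = {1,...,n}`
given in one-line notation as functions `ℕ → ℕ`. -/
def Bruhat (n : ℕ) (v w : ℕ → ℕ) : Prop :=
  ∀ i ≤ n, Dom ((Finset.Icc 1 i).image v) ((Finset.Icc 1 i).image w)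

/-!
Write `S i = {σ_1, …, σ_i}` and `W i = {w_1, …, w_i}`. By the tableau criterion it suffices to
show that, for every `i`, `S i` is the greatest `i`-set in the dominance order among those `U`
dominated by `W i` with `U ⊆ Y` (for `i ≤ p`), resp. `Y ⊆ U` (for `i ≥ p`): the `i`-th row
`{v_1, …, v_i}` of any `v ≤ w` with `vW_p = Y` lies in that family.

For `i ≤ p` the greedy choice keeps every unused `y ∈ Y` blocked: `S i` has at least as many
elements below `y` as `W i`, and this forces every competitor below `S i`. For `i > p` the
subroutine inserts `σ_i` at the position `q` where `S (i - 1)` first overtakes `W i`. A competitor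
`V ⊇ Y` must have an entry outside `Y` among its first `q` entries, because `S (i - 1) ⊇ Y` has
only `q - 1` elements below `σ_i`; deleting the last such entry leaves an `(i - 1)`-set dominated
by `W (i - 1)`, hence by `S (i - 1)`, and comparing entries position by position gives `V ≼ S i`.
-/

open Finset

lemma finite_setOf_mem (E : Finset ℕ) : (Set.ofPred (· ∈ E)).Finite := E.finite_toSet

@[simp] lemma toFinset_finite_setOf_mem (E : Finset ℕ) : (finite_setOf_mem E).toFinset = E := by
  ext; simp [Set.ofPred]

lemma nth_eq_nat_nth (E : Finset ℕ) (k : ℕ) : nth E k = Nat.nth (· ∈ E) (k - 1) := by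
  rw [Nat.nth_eq_getD_sort (finite_setOf_mem E), toFinset_finite_setOf_mem]; rfl

lemma count_mem_eq_card_filter_lt (E : Finset ℕ) (m : ℕ) :
    Nat.count (· ∈ E) m = #{e ∈ E | e < m} := by
  rw [Nat.count_eq_card_filter_range]; congr 1; ext; simp [and_comm]

section nth

variable {E F : Finset ℕ} {k l m r x : ℕ}

lemma nth_mem (hk : 1 ≤ k) (hkE : k ≤ #E) : nth E k ∈ E := by
  rw [nth_eq_nat_nth]
  exact Nat.nth_mem_of_lt_card (finite_setOf_mem E) (by simp; omega)

lemma nth_lt_nth (hk : 1 ≤ k) (hkl : k < l) (hlE : l ≤ #E) : nth E k < nth E l := by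
  rw [nth_eq_nat_nth, nth_eq_nat_nth]
  exact Nat.nth_lt_nth_of_lt_card (finite_setOf_mem E) (by omega) (by simp; omega)

lemma nth_le_nth (hk : 1 ≤ k) (hkl : k ≤ l) (hlE : l ≤ #E) : nth E k ≤ nth E l := by
  rcases hkl.eq_or_lt with rfl | hkl
  · rfl
  · exact (nth_lt_nth hk hkl hlE).le

lemma card_filter_lt_nth (hk : 1 ≤ k) (hkE : k ≤ #E) : #{e ∈ E | e < nth E k} = k - 1 := by
  rw [← count_mem_eq_card_filter_lt, nth_eq_nat_nth]
  exact Nat.count_nth_of_lt_card_finite (finite_setOf_mem E) (by simp; omega)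

lemma nth_card_filter_lt_add_one (hx : x ∈ E) : nth E (#{e ∈ E | e < x} + 1) = x := by
  rw [← count_mem_eq_card_filter_lt, nth_eq_nat_nth, Nat.add_sub_cancel]
  exact Nat.nth_count hx

lemma card_filter_lt_lt_card (hx : x ∈ E) : #{e ∈ E | e < x} < #E := by
  rw [← count_mem_eq_card_filter_lt]
  simpa using Nat.count_lt_card (finite_setOf_mem E) hx

lemma nth_lt_iff (hk : 1 ≤ k) (hkE : k ≤ #E) : nth E k < m ↔ k ≤ #{e ∈ E | e < m} := by
  rw [← count_mem_eq_card_filter_lt, nth_eq_nat_nth]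
  constructor
  · intro h
    have := Nat.count_monotone (· ∈ E) (Nat.succ_le_of_lt h)
    rwa [Nat.count_nth_succ (fun hf => by simp; omega), Nat.sub_add_cancel hk] at this
  · intro h
    exact Nat.nth_lt_of_lt_count (by omega)

lemma le_nth_iff (hk : 1 ≤ k) (hkE : k ≤ #E) : m ≤ nth E k ↔ #{e ∈ E | e < m} < k := by
  simpa using (nth_lt_iff (m := m) hk hkE).not

lemma card_filter_lt_insert (hx : x ∉ E) (m : ℕ) :
    #{e ∈ insert x E | e < m} = #{e ∈ E | e < m} + if x < m then 1 else 0 := by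
  rw [filter_insert]
  split_ifs
  · rw [card_insert_of_notMem (fun h => hx (mem_filter.1 h).1)]
  · rfl

lemma card_filter_lt_mono (h : E ⊆ F) (m : ℕ) : #{e ∈ E | e < m} ≤ #{e ∈ F | e < m} :=
  card_le_card (filter_subset_filter _ h)

lemma nth_insert_self (hx : x ∉ E) : nth (insert x E) (#{e ∈ E | e < x} + 1) = x := by
  simpa [card_filter_lt_insert hx] using nth_card_filter_lt_add_one (mem_insert_self x E)

lemma nth_insert_of_le (hx : x ∉ E) (hr : 1 ≤ r) (hrx : r ≤ #{e ∈ E | e < x}) :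
    nth (insert x E) r = nth E r := by
  have hrE : r ≤ #E := hrx.trans (card_le_card (filter_subset _ _))
  have hlt : nth E r < x := (nth_lt_iff hr hrE).2 hrx
  have h := nth_card_filter_lt_add_one (mem_insert_of_mem (nth_mem hr hrE) : nth E r ∈ insert x E)
  rwa [card_filter_lt_insert hx, if_neg hlt.not_gt, card_filter_lt_nth hr hrE,
    Nat.sub_add_cancel hr] at h

lemma nth_insert_of_lt (hx : x ∉ E) (hxr : #{e ∈ E | e < x} + 1 < r) (hrE : r ≤ #E + 1) :
    nth (insert x E) r = nth E (r - 1) := by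
  have hr : 1 ≤ r - 1 := by omega
  have hgt : x < nth E (r - 1) := by
    refine lt_of_le_of_ne ((le_nth_iff (E := E) hr (by omega)).2 (by omega)) ?_
    rintro rfl
    exact hx (nth_mem hr (by omega))
  have h := nth_card_filter_lt_add_one
    (mem_insert_of_mem (nth_mem hr (by omega)) : nth E (r - 1) ∈ insert x E)
  rwa [card_filter_lt_insert hx, if_pos hgt, card_filter_lt_nth hr (by omega),
    show r - 1 - 1 + 1 + 1 = r by omega] at h

lemma nth_insert_le_nth (hx : x ∉ E) (hr : 1 ≤ r) (hrE : r ≤ #E) :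
    nth (insert x E) r ≤ nth E r := by
  rw [le_nth_iff hr hrE]
  calc #{e ∈ E | e < nth (insert x E) r} ≤ #{e ∈ insert x E | e < nth (insert x E) r} :=
        card_filter_lt_mono (subset_insert x E) _
    _ = r - 1 := card_filter_lt_nth hr (by rw [card_insert_of_notMem hx]; omega)
    _ < r := by omega

lemma nth_le_nth_insert (hx : x ∉ E) (hr : 2 ≤ r) (hrE : r ≤ #E + 1) :
    nth E (r - 1) ≤ nth (insert x E) r := by
  rw [le_nth_iff (by omega) (by rw [card_insert_of_notMem hx]; omega), card_filter_lt_insert hx,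
    card_filter_lt_nth (by omega) (by omega)]
  split_ifs <;> omega

lemma card_image_nth_Ioc (hlE : l ≤ #E) : #((Ioc k l).image (nth E)) = l - k := by
  rw [card_image_of_injOn, Nat.card_Ioc]
  intro a ha b hb hab
  simp only [coe_Ioc, Set.mem_Ioc] at ha hb
  by_contra hne
  rcases Nat.lt_or_gt_of_ne hne with h | h
  · exact (nth_lt_nth (by omega) h (hb.2.trans hlE)).ne hab
  · exact (nth_lt_nth (by omega) h (ha.2.trans hlE)).ne' hab

lemma card_filter_lt_add_le (hmem : ∀ u, k < u → u ≤ l → nth E u ∈ F) (hkl : k < l)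
    (hlE : l ≤ #E) (hlm : nth E l < m) :
    #{f ∈ F | f < nth E (k + 1)} + (l - k) ≤ #{f ∈ F | f < m} := by
  rw [← card_image_nth_Ioc hlE, ← card_union_of_disjoint]
  · refine card_le_card (union_subset (fun f hf => ?_) fun f hf => ?_)
    · simp only [mem_filter] at hf ⊢
      exact ⟨hf.1, hf.2.trans_le ((nth_le_nth (by omega) (by omega) hlE).trans hlm.le)⟩
    · obtain ⟨u, hu, rfl⟩ := mem_image.1 hf
      rw [mem_Ioc] at hu
      exact mem_filter.2 ⟨hmem u hu.1 hu.2, (nth_le_nth (by omega) hu.2 hlE).trans_lt hlm⟩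
  · rw [disjoint_left]
    intro f hf hf'
    obtain ⟨u, hu, rfl⟩ := mem_image.1 hf'
    rw [mem_Ioc] at hu
    exact (mem_filter.1 hf).2.not_ge (nth_le_nth (by omega) (by omega) (hu.2.trans hlE))

lemma dom_iff_nth_le : Dom E F ↔ #E = #F ∧ ∀ k, 1 ≤ k → k ≤ #E → nth E k ≤ nth F k := by
  simp only [Dom, List.forall₂_iff_get, length_sort]
  refine and_congr_right fun hEF => ⟨fun h k hk hkE => ?_, fun h i hiE hiF => ?_⟩
  · rw [nth, nth, List.getD_eq_getElem _ _ (by simp; omega),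
      List.getD_eq_getElem _ _ (by simp; omega)]
    exact h (k - 1) (by omega) (by omega)
  · simpa [nth, List.getD_eq_getElem, *] using h (i + 1) (by omega) (by omega)

lemma dom_iff_card_filter_lt_le :
    Dom E F ↔ #E = #F ∧ ∀ m, #{f ∈ F | f < m} ≤ #{e ∈ E | e < m} := by
  rw [dom_iff_nth_le]
  refine and_congr_right fun hEF => ⟨fun h m => ?_, fun h k hk hkE => ?_⟩
  · set t := #{f ∈ F | f < m}
    rcases Nat.eq_zero_or_pos t with ht | ht
    · omega
    have htF : t ≤ #F := card_le_card (filter_subset _ _)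
    exact (nth_lt_iff ht (by omega)).1
      ((h t ht (by omega)).trans_lt ((nth_lt_iff ht htF).2 le_rfl))
  · have := (nth_lt_iff hk hkE).2
      ((nth_lt_iff hk (hEF ▸ hkE)).1 (Nat.lt_succ_self _) |>.trans (h _))
    omega

lemma Dom.refl (E : Finset ℕ) : Dom E E := List.forall₂_refl _

end nth

lemma card_filter_lt_succ (E : Finset ℕ) (m : ℕ) :
    #{e ∈ E | e < m + 1} = #{e ∈ E | e < m} + if m ∈ E then 1 else 0 := by
  rw [← count_mem_eq_card_filter_lt, ← count_mem_eq_card_filter_lt, Nat.count_succ]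

lemma card_filter_lt_eq_card {E : Finset ℕ} {m : ℕ} (h : ∀ e ∈ E, e < m) :
    #{e ∈ E | e < m} = #E := by
  rw [filter_true_of_mem h]

/-- The invariant kept by the greedy phase; it makes the greedy choice optimal
(`dom_of_saturated`). -/
def Saturated (Y W S : Finset ℕ) : Prop :=
  ∀ z ∈ Y, z ∉ S → #{s ∈ S | s < z} ≤ #{w ∈ W | w < z}

def IsGreatestDomBelow (P : Finset ℕ → Prop) (W S : Finset ℕ) : Prop :=
  P S ∧ Dom S W ∧ ∀ U, P U → Dom U W → Dom U S

section Greedy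

variable {Y W S V : Finset ℕ} {x y : ℕ}

lemma dom_of_saturated (hsat : Saturated Y W S) (hVY : V ⊆ Y) (hVS : #V = #S)
    (hVW : Dom V W) : Dom V S := by
  rw [dom_iff_card_filter_lt_le] at hVW ⊢
  refine ⟨hVS, fun m => ?_⟩
  set N := m + (V ∪ S).sup id + 1
  have hN : ∀ e ∈ V ∪ S, e < N := fun e he => by
    have : e ≤ (V ∪ S).sup id := le_sup (f := id) he
    omega
  refine Nat.decreasingInduction (motive := fun k _ => #{s ∈ S | s < k} ≤ #{v ∈ V | v < k})
    (fun k _ ih => ?_) ?_ (show m ≤ N by omega)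
  · by_cases hk : k ∈ V ∧ k ∉ S
    · exact (hsat k (hVY hk.1) hk.2).trans (hVW.2 k)
    · rw [card_filter_lt_succ, card_filter_lt_succ] at ih
      split_ifs at ih <;> first | omega | tauto
  · rw [card_filter_lt_eq_card fun e he => hN e (mem_union_left _ he),
      card_filter_lt_eq_card fun e he => hN e (mem_union_right _ he), hVS]

lemma Saturated.insert (hsat : Saturated Y W S) (hxW : x ∉ W) (hyS : y ∉ S)
    (hy : ∀ z ∈ Y, z ∉ S → z ≤ x → z ≤ y) : Saturated Y (insert x W) (insert y S) := by
  intro z hzY hz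
  rw [mem_insert, not_or] at hz
  rw [card_filter_lt_insert hxW, card_filter_lt_insert hyS]
  have := hsat z hzY hz.2
  have := fun hzx => hy z hzY hz.2 hzx
  split_ifs <;> omega

lemma Dom.insert (h : Dom S W) (hyS : y ∉ S) (hxW : x ∉ W) (hyx : y ≤ x) :
    Dom (insert y S) (insert x W) := by
  rw [dom_iff_card_filter_lt_le] at h ⊢
  refine ⟨by rw [card_insert_of_notMem hyS, card_insert_of_notMem hxW, h.1], fun m => ?_⟩
  rw [card_filter_lt_insert hyS, card_filter_lt_insert hxW]
  have := h.2 m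
  split_ifs <;> omega

end Greedy

lemma card_filter_lt_eq_of_nth_lt_of_lt_nth {E : Finset ℕ} {x q : ℕ} (hq : 1 ≤ q)
    (hqE : q ≤ #E + 1) (hlt : 2 ≤ q → nth E (q - 1) < x) (hgt : q ≤ #E → x < nth E q) :
    #{e ∈ E | e < x} = q - 1 := by
  refine le_antisymm ?_ ?_
  · rcases Nat.lt_or_ge #E q with h | h
    · have := card_le_card (filter_subset (· < x) E)
      omega
    · have := (le_nth_iff hq h).1 (hgt h).le
      omega
  · rcases Nat.lt_or_ge q 2 with h | h
    · omega
    · exact (nth_lt_iff (by omega) (by omega)).1 (hlt h)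

lemma notMem_of_nth_lt_of_lt_nth {E : Finset ℕ} {x q : ℕ} (hq : 1 ≤ q)
    (hqE : q ≤ #E + 1) (hlt : 2 ≤ q → nth E (q - 1) < x) (hgt : q ≤ #E → x < nth E q) :
    x ∉ E := by
  intro hx
  have hpos := card_filter_lt_eq_of_nth_lt_of_lt_nth hq hqE hlt hgt
  have hqE' : q ≤ #E := by have := card_filter_lt_lt_card hx; omega
  have := nth_card_filter_lt_add_one hx
  rw [hpos, Nat.sub_add_cancel hq] at this
  exact (hgt hqE').ne this.symm

lemma card_filter_lt_erase_nth {E : Finset ℕ} {s : ℕ} (hs : 1 ≤ s) (hsE : s ≤ #E) :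
    #{e ∈ E.erase (nth E s) | e < nth E s} = s - 1 := by
  rw [filter_erase, erase_eq_of_notMem (by simp), card_filter_lt_nth hs hsE]

lemma nth_erase_nth_of_lt {E : Finset ℕ} {s k : ℕ} (hs : 1 ≤ s) (hsE : s ≤ #E) (hk : 1 ≤ k)
    (hks : k < s) : nth (E.erase (nth E s)) k = nth E k := by
  have := nth_insert_of_le (notMem_erase (nth E s) E) hk
    (by rw [card_filter_lt_erase_nth hs hsE]; omega)
  rwa [insert_erase (nth_mem hs hsE), eq_comm] at this

lemma nth_erase_nth_of_le {E : Finset ℕ} {s k : ℕ} (hs : 1 ≤ s) (hsk : s ≤ k) (hkE : k < #E) :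
    nth (E.erase (nth E s)) k = nth E (k + 1) := by
  have hsE : nth E s ∈ E := nth_mem hs (by omega)
  have := nth_insert_of_lt (notMem_erase (nth E s) E) (r := k + 1)
    (by rw [card_filter_lt_erase_nth hs (by omega)]; omega)
    (by rw [card_erase_of_mem hsE]; omega)
  rwa [insert_erase hsE, Nat.add_sub_cancel, eq_comm] at this

/-- The index `q` of the insertion subroutine: the least `q` with `nth B q > nth A' q`,
where `nth B (#B + 1)` counts as `∞`. -/
structure IsInsertionIndex (B A' : Finset ℕ) (q : ℕ) : Prop where
  one_le : 1 ≤ q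
  le_card_add_one : q ≤ #B + 1
  lt_nth : q ≤ #B → nth A' q < nth B q
  nth_le : ∀ r, 1 ≤ r → r < q → nth B r ≤ nth A' r

section InsertionStep

variable {Y A B V : Finset ℕ} {γ q : ℕ}

lemma IsInsertionIndex.nth_pred_lt (hq : IsInsertionIndex B (insert γ A) q) (hγ : γ ∉ A)
    (hBA : Dom B A) (h2q : 2 ≤ q) : nth B (q - 1) < nth (insert γ A) q := by
  have hqA : q ≤ #(insert γ A) := by
    rw [card_insert_of_notMem hγ, ← (dom_iff_nth_le.1 hBA).1]; exact hq.le_card_add_one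
  exact (hq.nth_le (q - 1) (by omega) (by omega)).trans_lt (nth_lt_nth (by omega) (by omega) hqA)

lemma IsInsertionIndex.card_filter_lt (hq : IsInsertionIndex B (insert γ A) q) (hγ : γ ∉ A)
    (hBA : Dom B A) : #{b ∈ B | b < nth (insert γ A) q} = q - 1 :=
  card_filter_lt_eq_of_nth_lt_of_lt_nth hq.one_le hq.le_card_add_one (hq.nth_pred_lt hγ hBA)
    hq.lt_nth

lemma IsInsertionIndex.notMem (hq : IsInsertionIndex B (insert γ A) q) (hγ : γ ∉ A)
    (hBA : Dom B A) : nth (insert γ A) q ∉ B :=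
  notMem_of_nth_lt_of_lt_nth hq.one_le hq.le_card_add_one (hq.nth_pred_lt hγ hBA) hq.lt_nth

lemma IsInsertionIndex.nth_insert_nth_insert (hq : IsInsertionIndex B (insert γ A) q)
    (hγ : γ ∉ A) (hBA : Dom B A) :
    nth (insert (nth (insert γ A) q) B) q = nth (insert γ A) q := by
  have := nth_insert_self (hq.notMem hγ hBA)
  rwa [hq.card_filter_lt hγ hBA, Nat.sub_add_cancel hq.one_le] at this

lemma IsInsertionIndex.le_nth (hq : IsInsertionIndex B (insert γ A) q) (hγ : γ ∉ A)
    (hBA : Dom B A) : γ ≤ nth (insert γ A) q := by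
  set σ := nth (insert γ A) q
  by_contra! hσγ
  have hB := dom_iff_nth_le.1 hBA
  have hqA' : q ≤ #(insert γ A) := by
    rw [card_insert_of_notMem hγ, ← hB.1]; exact hq.le_card_add_one
  have hqσ : q ≤ #{a ∈ A | a < σ + 1} := by
    have := (nth_lt_iff hq.one_le hqA').1 (Nat.lt_succ_self σ)
    rwa [card_filter_lt_insert hγ, if_neg (by omega), add_zero] at this
  have hqA : q ≤ #A := hqσ.trans (card_le_card (filter_subset _ _))
  have h1 := (nth_lt_iff hq.one_le hqA).2 hqσ
  have h2 := hB.2 q hq.one_le (hB.1 ▸ hqA)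
  have h3 := hq.lt_nth (hB.1 ▸ hqA)
  omega

lemma IsInsertionIndex.dom_insert (hq : IsInsertionIndex B (insert γ A) q) (hγ : γ ∉ A)
    (hBA : Dom B A) : Dom (insert (nth (insert γ A) q) B) (insert γ A) := by
  have hpos := hq.card_filter_lt hγ hBA
  have hσB := hq.notMem hγ hBA
  obtain ⟨hB, hBA'⟩ := dom_iff_nth_le.1 hBA
  have := hq.one_le
  rw [dom_iff_nth_le, card_insert_of_notMem hσB, card_insert_of_notMem hγ, hB]
  refine ⟨rfl, fun r hr hrA => ?_⟩
  rcases lt_trichotomy r q with hrq | rfl | hrq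
  · rw [nth_insert_of_le hσB hr (by omega)]
    exact hq.nth_le r hr hrq
  · exact (hq.nth_insert_nth_insert hγ hBA).le
  · rw [nth_insert_of_lt hσB (r := r) (by omega) (by omega)]
    exact (hBA' (r - 1) (by omega) (by omega)).trans (nth_le_nth_insert hγ (by omega) (by omega))

lemma IsInsertionIndex.dom_erase_nth (hq : IsInsertionIndex B (insert γ A) q) (hγ : γ ∉ A)
    (hYB : Y ⊆ B) (hBA : Dom B A) (hV : #V = #A + 1) (hVA : Dom V (insert γ A)) {s : ℕ}
    (hs : 1 ≤ s) (hsq : s ≤ q) (hsY : ∀ u, s < u → u ≤ q → nth V u ∈ Y) :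
    Dom (V.erase (nth V s)) A := by
  have hpos := hq.card_filter_lt hγ hBA
  have hσB := hq.notMem hγ hBA
  have hB := dom_iff_nth_le.1 hBA
  have hVA' := dom_iff_nth_le.1 hVA
  have hqA : q ≤ #A + 1 := hB.1 ▸ hq.le_card_add_one
  rw [dom_iff_nth_le, card_erase_of_mem (nth_mem hs (by omega)), hV, Nat.add_sub_cancel]
  refine ⟨rfl, fun k hk hkA => ?_⟩
  rcases lt_or_ge k s with hks | hks
  · rw [nth_erase_nth_of_lt hs (by omega) hk hks]
    exact (hVA'.2 k hk (by omega)).trans (nth_insert_le_nth hγ hk hkA)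
  rw [nth_erase_nth_of_le hs hks (by omega)]
  rcases lt_or_ge k q with hkq | hkq
  · refine le_trans ?_ (hB.2 k hk (by omega))
    rw [le_nth_iff hk (by omega)]
    have hσ : nth V q < nth (insert γ A) q :=
      (hVA'.2 q hq.one_le (by omega)).lt_of_ne fun h => hσB (h ▸ hYB (hsY q (by omega) le_rfl))
    have := card_filter_lt_add_le (F := B) (fun u hku huq => hYB (hsY u (by omega) huq)) hkq
      (by omega) hσ
    omega
  · have hγk : γ ≤ nth A k := (hq.le_nth hγ hBA).trans
      ((nth_le_nth hq.one_le hkq (by omega)).trans (nth_insert_le_nth hγ hk hkA))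
    have h := nth_insert_of_lt hγ (r := k + 1)
      (by have := (le_nth_iff hk hkA).1 hγk; omega) (by omega)
    rw [Nat.add_sub_cancel] at h
    rw [← h]
    exact hVA'.2 (k + 1) (by omega) (by omega)

/-- `B ⊇ Y` has only `q - 1` elements below `nth (insert γ A) q`, so the first `q` entries of `V`
cannot all lie in `Y`. -/
lemma IsInsertionIndex.exists_last_notMem (hq : IsInsertionIndex B (insert γ A) q) (hγ : γ ∉ A)
    (hYB : Y ⊆ B) (hBA : Dom B A) (hV : #V = #A + 1) (hVA : Dom V (insert γ A)) :
    ∃ s, 1 ≤ s ∧ s ≤ q ∧ nth V s ∉ Y ∧ ∀ u, s < u → u ≤ q → nth V u ∈ Y := by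
  have hq1 := hq.one_le
  have hqA : q ≤ #A + 1 := (dom_iff_nth_le.1 hBA).1 ▸ hq.le_card_add_one
  have hT : ({s ∈ Icc 1 q | nth V s ∉ Y}).Nonempty := by
    by_contra hT
    rw [not_nonempty_iff_eq_empty, filter_eq_empty_iff] at hT
    have hY : ∀ u, 0 < u → u ≤ q → nth V u ∈ B := fun u hu huq =>
      hYB (not_not.1 (hT (mem_Icc.2 ⟨hu, huq⟩)))
    have hσ : nth V q < nth (insert γ A) q :=
      ((dom_iff_nth_le.1 hVA).2 q hq1 (by omega)).lt_of_ne
        fun h => hq.notMem hγ hBA (h ▸ hY q hq1 le_rfl)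
    have := card_filter_lt_add_le (F := B) (k := 0) hY hq1 (by omega) hσ
    have := hq.card_filter_lt hγ hBA
    omega
  obtain ⟨hs, hsY⟩ := mem_filter.1 (max'_mem _ hT)
  rw [mem_Icc] at hs
  refine ⟨_, hs.1, hs.2, hsY, fun u hsu huq => ?_⟩
  by_contra hu
  exact (le_max' _ u (mem_filter.2 ⟨mem_Icc.2 ⟨by omega, huq⟩, hu⟩)).not_gt hsu

lemma IsInsertionIndex.dom_insert_of_dom (hq : IsInsertionIndex B (insert γ A) q) (hγ : γ ∉ A)
    (hYB : Y ⊆ B) (hBA : Dom B A) (hmax : ∀ U, Y ⊆ U → #U = #A → Dom U A → Dom U B)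
    (hYV : Y ⊆ V) (hV : #V = #A + 1) (hVA : Dom V (insert γ A)) :
    Dom V (insert (nth (insert γ A) q) B) := by
  have hpos := hq.card_filter_lt hγ hBA
  have hσB := hq.notMem hγ hBA
  obtain ⟨hB, -⟩ := dom_iff_nth_le.1 hBA
  obtain ⟨-, hVA'⟩ := dom_iff_nth_le.1 hVA
  have hq1 := hq.one_le
  have hqA : q ≤ #A + 1 := hB ▸ hq.le_card_add_one
  obtain ⟨s, hs1, hsq, hsY, hY⟩ := hq.exists_last_notMem hγ hYB hBA hV hVA
  have hsV : nth V s ∈ V := nth_mem hs1 (by omega)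
  have hU : #(V.erase (nth V s)) = #A := by rw [card_erase_of_mem hsV, hV, Nat.add_sub_cancel]
  obtain ⟨-, hUB⟩ := dom_iff_nth_le.1
    (hmax _ (subset_erase.2 ⟨hYV, hsY⟩) hU (hq.dom_erase_nth hγ hYB hBA hV hVA hs1 hsq hY))
  rw [dom_iff_nth_le, card_insert_of_notMem hσB, hV, hB]
  refine ⟨rfl, fun r hr hrA => ?_⟩
  rcases lt_trichotomy r q with hrq | rfl | hrq
  · rw [nth_insert_of_le hσB hr (by omega)]
    refine le_trans ?_ (hUB r hr (by omega))
    rcases lt_or_ge r s with hrs | hrs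
    · rw [nth_erase_nth_of_lt hs1 (by omega) hr hrs]
    · rw [nth_erase_nth_of_le hs1 hrs (by omega)]
      exact nth_le_nth hr (by omega) (by omega)
  · rw [hq.nth_insert_nth_insert hγ hBA]
    exact hVA' r hr (by omega)
  · have h := nth_erase_nth_of_le (E := V) (k := r - 1) hs1 (by omega) (by omega)
    rw [Nat.sub_add_cancel hr] at h
    rw [nth_insert_of_lt hσB (r := r) (by omega) (by omega), ← h]
    exact hUB (r - 1) (by omega) (by omega)

theorem IsGreatestDomBelow.insert_nth {j : ℕ}
    (h : IsGreatestDomBelow (fun U => Y ⊆ U ∧ #U = j) A B) (hA : #A = j) (hγ : γ ∉ A)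
    (hq : IsInsertionIndex B (insert γ A) q) :
    IsGreatestDomBelow (fun U => Y ⊆ U ∧ #U = j + 1) (insert γ A)
      (insert (nth (insert γ A) q) B) := by
  subst hA
  obtain ⟨⟨hYB, -⟩, hBA, hmax⟩ := h
  have hσB := hq.notMem hγ hBA
  refine ⟨⟨hYB.trans (subset_insert _ _), ?_⟩, hq.dom_insert hγ hBA, fun V ⟨hYV, hV⟩ hVA =>
    hq.dom_insert_of_dom hγ hYB hBA (fun U hYU hU => hmax U ⟨hYU, hU⟩) hYV hV hVA⟩
  rw [card_insert_of_notMem hσB, (dom_iff_nth_le.1 hBA).1]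

end InsertionStep

section Procedure

variable {n p : ℕ} {f w σ : ℕ → ℕ} {Y : Finset ℕ}

lemma card_image_Icc (hf : Set.InjOn f (Set.Icc 1 n)) {i : ℕ} (hi : i ≤ n) :
    #((Icc 1 i).image f) = i := by
  rw [card_image_of_injOn (by rw [coe_Icc]; exact hf.mono (Set.Icc_subset_Icc_right hi)),
    Nat.card_Icc, Nat.add_sub_cancel]

lemma notMem_image_Icc (hf : Set.InjOn f (Set.Icc 1 n)) {i : ℕ} (hi : i + 1 ≤ n) :
    f (i + 1) ∉ (Icc 1 i).image f := by
  rintro hmem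
  obtain ⟨x, hx, hfx⟩ := mem_image.1 hmem
  rw [mem_Icc] at hx
  have := hf (Set.mem_Icc.2 ⟨hx.1, by omega⟩) (Set.mem_Icc.2 ⟨by omega, hi⟩) hfx
  omega

lemma image_Icc_add_one (f : ℕ → ℕ) (i : ℕ) :
    (Icc 1 (i + 1)).image f = insert (f (i + 1)) ((Icc 1 i).image f) := by
  rw [← insert_Icc_right_eq_Icc_add_one (by omega), image_insert]

lemma greedy_invariant (hw : Set.InjOn w (Set.Icc 1 p))
    (hσ1 : ∀ j, 1 ≤ j → j ≤ p →
      ((Y \ ((Finset.Icc 1 (j - 1)).image σ)).filter (fun y => y ≤ w j)).max = (σ j : WithBot ℕ)) :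
    ∀ i ≤ p, (Icc 1 i).image σ ⊆ Y ∧ Dom ((Icc 1 i).image σ) ((Icc 1 i).image w) ∧
      Saturated Y ((Icc 1 i).image w) ((Icc 1 i).image σ) := by
  intro i
  induction i with
  | zero =>
    intro _
    simp only [Icc_eq_empty (by omega : ¬ 1 ≤ 0), image_empty]
    exact ⟨empty_subset _, Dom.refl _, fun _ _ _ => le_rfl⟩
  | succ i ih =>
    intro hi
    obtain ⟨hSY, hSW, hsat⟩ := ih (by omega)
    have hmax := hσ1 (i + 1) (by omega) hi
    rw [Nat.add_sub_cancel] at hmax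
    obtain ⟨hσ, hσw⟩ := mem_filter.1 (mem_of_max hmax)
    obtain ⟨hσY, hσS⟩ := mem_sdiff.1 hσ
    have hσ_max : ∀ z ∈ Y, z ∉ (Icc 1 i).image σ → z ≤ w (i + 1) → z ≤ σ (i + 1) :=
      fun z hzY hzS hzw =>
        WithBot.coe_le_coe.1 (hmax ▸ le_max (mem_filter.2 ⟨mem_sdiff.2 ⟨hzY, hzS⟩, hzw⟩) :)
    have hwW := notMem_image_Icc hw hi
    rw [image_Icc_add_one, image_Icc_add_one]
    exact ⟨insert_subset hσY hSY, hSW.insert hσS hwW hσw, hsat.insert hwW hσS hσ_max⟩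

lemma isGreatestDomBelow_greedy (hw : Set.InjOn w (Set.Icc 1 p))
    (hσ1 : ∀ j, 1 ≤ j → j ≤ p →
      ((Y \ ((Finset.Icc 1 (j - 1)).image σ)).filter (fun y => y ≤ w j)).max = (σ j : WithBot ℕ))
    {i : ℕ} (hi : i ≤ p) :
    IsGreatestDomBelow (fun U => U ⊆ Y ∧ #U = i) ((Icc 1 i).image w) ((Icc 1 i).image σ) := by
  obtain ⟨hSY, hSW, hsat⟩ := greedy_invariant hw hσ1 i hi
  have hS : #((Icc 1 i).image σ) = i := (dom_iff_nth_le.1 hSW).1.trans (card_image_Icc hw hi)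
  exact ⟨⟨hSY, hS⟩, hSW, fun U ⟨hUY, hU⟩ hUW => dom_of_saturated hsat hUY (hU.trans hS.symm) hUW⟩

lemma isGreatestDomBelow_insertion (hw : Set.InjOn w (Set.Icc 1 n))
    (hσ2 : ∀ j, p < j → j ≤ n → ∃ q, 1 ≤ q ∧ q ≤ j ∧
      (q ≤ j - 1 →
        nth ((Finset.Icc 1 (j - 1)).image σ) q > nth ((Finset.Icc 1 j).image w) q) ∧
      (∀ r, 1 ≤ r → r < q →
        nth ((Finset.Icc 1 (j - 1)).image σ) r ≤ nth ((Finset.Icc 1 j).image w) r) ∧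
      σ j = nth ((Finset.Icc 1 j).image w) q)
    (hbase : IsGreatestDomBelow (fun U => Y ⊆ U ∧ #U = p) ((Icc 1 p).image w)
      ((Icc 1 p).image σ)) {i : ℕ} (hpi : p ≤ i) (hi : i ≤ n) :
    IsGreatestDomBelow (fun U => Y ⊆ U ∧ #U = i) ((Icc 1 i).image w) ((Icc 1 i).image σ) := by
  induction i, hpi using Nat.le_induction with
  | base => exact hbase
  | succ j hpj ih =>
    obtain ⟨q, hq1, hqj, hq_lt, hq_le, hσq⟩ := hσ2 (j + 1) (by omega) hi
    rw [Nat.add_sub_cancel] at hq_lt hq_le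
    have hSW := ih (by omega)
    have hW := card_image_Icc hw (show j ≤ n by omega)
    have hS := (dom_iff_nth_le.1 hSW.2.1).1.trans hW
    rw [image_Icc_add_one σ, hσq, image_Icc_add_one w] at *
    exact hSW.insert_nth hW (notMem_image_Icc hw hi)
      ⟨hq1, by omega, fun h => hq_lt (by omega), hq_le⟩

end Procedure

theorem stmt16_general (n p : ℕ) (hp : p ≤ n) (w σ : ℕ → ℕ)
    (hw : Set.BijOn w (Set.Icc 1 n) (Set.Icc 1 n))
    (Y : Finset ℕ) (hYc : Y.card = p)
    -- for j ≤ p, σ_j is the maximum element of Y \ {σ_1,...,σ_{j-1}} not exceeding w_j: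
    (hσ1 : ∀ j, 1 ≤ j → j ≤ p →
      ((Y \ ((Finset.Icc 1 (j - 1)).image σ)).filter (fun y => y ≤ w j)).max = (σ j : WithBot ℕ))
    -- for j > p, σ_j is the output of the subroutine with A = {w_1,...,w_{j-1}},
    -- B = {σ_1,...,σ_{j-1}}, γ = w_j (so that A ∪ {γ} = {w_1,...,w_j}):
    -- q is least in {1,...,j} with b̃_q > ã'_q (with b̃_j = ∞), and σ_j = ã'_q:
    (hσ2 : ∀ j, p < j → j ≤ n → ∃ q, 1 ≤ q ∧ q ≤ j ∧
      (q ≤ j - 1 →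
        nth ((Finset.Icc 1 (j - 1)).image σ) q > nth ((Finset.Icc 1 j).image w) q) ∧
      (∀ r, 1 ≤ r → r < q →
        nth ((Finset.Icc 1 (j - 1)).image σ) r ≤ nth ((Finset.Icc 1 j).image w) r) ∧
      σ j = nth ((Finset.Icc 1 j).image w) q) :
    (Finset.Icc 1 p).image σ = Y ∧
    Bruhat n σ w ∧
    (∀ v : ℕ → ℕ, Set.BijOn v (Set.Icc 1 n) (Set.Icc 1 n) →
      (Finset.Icc 1 p).image v = Y → ¬ Bruhat n v σ → ¬ Bruhat n v w) ∧
    (∀ v : ℕ → ℕ, Set.BijOn v (Set.Icc 1 n) (Set.Icc 1 n) →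
      (Finset.Icc 1 p).image v = Y → Bruhat n v w → Bruhat n v σ) := by
  have hgreedy := fun i (hi : i ≤ p) =>
    isGreatestDomBelow_greedy (hw.injOn.mono (Set.Icc_subset_Icc_right hp)) hσ1 hi
  obtain ⟨⟨hSY, hS⟩, hSW, -⟩ := hgreedy p le_rfl
  have hSp : (Icc 1 p).image σ = Y := eq_of_subset_of_card_le hSY (by rw [hS, hYc])
  have hinsertion := fun i (hpi : p ≤ i) =>
    isGreatestDomBelow_insertion hw.injOn hσ2 ⟨⟨hSp.ge, hS⟩, hSW, fun U ⟨hYU, hU⟩ _ =>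
      eq_of_subset_of_card_le hYU (by rw [hU, hYc]) ▸ hSp ▸ Dom.refl _⟩ hpi
  have key : ∀ i ≤ n, Dom ((Icc 1 i).image σ) ((Icc 1 i).image w) ∧
      ∀ v : ℕ → ℕ, Set.BijOn v (Set.Icc 1 n) (Set.Icc 1 n) → (Icc 1 p).image v = Y →
        Dom ((Icc 1 i).image v) ((Icc 1 i).image w) →
        Dom ((Icc 1 i).image v) ((Icc 1 i).image σ) := by
    intro i hi
    rcases le_total i p with hip | hpi
    · obtain ⟨-, hSW, hmax⟩ := hgreedy i hip
      exact ⟨hSW, fun v hv hvY => hmax _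
        ⟨hvY ▸ image_subset_image (Icc_subset_Icc_right hip), card_image_Icc hv.injOn hi⟩⟩
    · obtain ⟨-, hSW, hmax⟩ := hinsertion i hpi hi
      exact ⟨hSW, fun v hv hvY => hmax _
        ⟨hvY ▸ image_subset_image (Icc_subset_Icc_right hpi), card_image_Icc hv.injOn hi⟩⟩
  refine ⟨hSp, fun i hi => (key i hi).1, fun v hv hvY hvσ hvw => hvσ fun i hi =>
    (key i hi).2 v hv hvY (hvw i hi), fun v hv hvY hvw i hi => (key i hi).2 v hv hvY (hvw i hi)⟩

theorem stmt16 (n p : ℕ) (hp : p ≤ n) (w σ : ℕ → ℕ)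
    (hw : Set.BijOn w (Set.Icc 1 n) (Set.Icc 1 n))
    (Y : Finset ℕ) (hYs : Y ⊆ Finset.Icc 1 n) (hYc : Y.card = p)
    -- Y ≤ {w_1,...,w_p}:
    (hdom : Dom Y ((Finset.Icc 1 p).image w))
    -- for j ≤ p, σ_j is the maximum element of Y \ {σ_1,...,σ_{j-1}} not exceeding w_j:
    (hσ1 : ∀ j, 1 ≤ j → j ≤ p →
      ((Y \ ((Finset.Icc 1 (j - 1)).image σ)).filter (fun y => y ≤ w j)).max = (σ j : WithBot ℕ))
    -- for j > p, σ_j is the output of the subroutine with A = {w_1,...,w_{j-1}},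
    -- B = {σ_1,...,σ_{j-1}}, γ = w_j (so that A ∪ {γ} = {w_1,...,w_j}):
    -- q is least in {1,...,j} with b̃_q > ã'_q (with b̃_j = ∞), and σ_j = ã'_q:
    (hσ2 : ∀ j, p < j → j ≤ n → ∃ q, 1 ≤ q ∧ q ≤ j ∧
      (q ≤ j - 1 →
        nth ((Finset.Icc 1 (j - 1)).image σ) q > nth ((Finset.Icc 1 j).image w) q) ∧
      (∀ r, 1 ≤ r → r < q →
        nth ((Finset.Icc 1 (j - 1)).image σ) r ≤ nth ((Finset.Icc 1 j).image w) r) ∧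
      σ j = nth ((Finset.Icc 1 j).image w) q) :
    (Finset.Icc 1 p).image σ = Y ∧
    Bruhat n σ w ∧
    (∀ v : ℕ → ℕ, Set.BijOn v (Set.Icc 1 n) (Set.Icc 1 n) →
      (Finset.Icc 1 p).image v = Y → ¬ Bruhat n v σ → ¬ Bruhat n v w) ∧
    (∀ v : ℕ → ℕ, Set.BijOn v (Set.Icc 1 n) (Set.Icc 1 n) →
      (Finset.Icc 1 p).image v = Y → Bruhat n v w → Bruhat n v σ) :=
  stmt16_general n p hp w σ hw Y hYc hσ1 hσ2
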